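/- arXiv:1605.01039 — 2 statements merged into one kernel-verified Lean document; each statement's English description precedes it below -/
import Mathlib

section
/- With the square root embedding Ψ = Ψ_v of a positively edge-weighted tree T into ℝ^{m-1}, for any nodes v_1, v_2 of T, the squared Euclidean norm ‖Ψ(v_1) - Ψ(v_2)‖² equals the tree distance d(v_1,v_2) = Σ_{e ∈ P_{v_1,v_2}} w(e). Equivalently, ‖Ψ(v_1) - Ψ(v_2)‖ = √(d(v_1,v_2)). -/
open SimpleGraph

/-- The unique path between two vertices of a tree, as a walk. -/
noncomputable def treePath {V : Type*} (G : SimpleGraph V) (hG : G.IsTree) (a b : V) :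
    G.Walk a b :=
  (hG.existsUnique_path a b).choose

/-- The square root embedding with base node `v`: the coordinate of `Ψ_v u` at edge `e`
is `√(w e)` if `e` lies on the path from `v` to `u`, and `0` otherwise. -/
noncomputable def sqrtEmbed {V : Type*} [DecidableEq V] (G : SimpleGraph V) (hG : G.IsTree)
    [Fintype G.edgeSet] (w : Sym2 V → ℝ) (v u : V) : EuclideanSpace ℝ G.edgeSet :=
  WithLp.toLp 2 (fun (e : G.edgeSet) => if (e : Sym2 V) ∈ (treePath G hG v u).edges then Real.sqrt (w e) else 0)

/-- The tree metric: sum of the weights of the edges on the unique path. -/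
noncomputable def treeDist {V : Type*} (G : SimpleGraph V) (hG : G.IsTree)
    (w : Sym2 V → ℝ) (a b : V) : ℝ :=
  ((treePath G hG a b).edges.map w).sum

/-! In a tree, the walk `v₁ → v → v₂` obtained by gluing the paths from the base node `v`
traverses every edge as often, modulo `2`, as the path from `v₁` to `v₂`. Since paths use each
edge at most once, an edge lies on the path from `v₁` to `v₂` exactly when it lies on one of
the two paths from `v`, so the coordinates of `Ψ_v v₁ - Ψ_v v₂` are `±√(w e)` on that path and
`0` elsewhere. -/

namespace SimpleGraph

variable {V : Type*} {G : SimpleGraph V} (hG : G.IsTree)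

theorem treePath_isPath (a b : V) : (treePath G hG a b).IsPath :=
  (hG.existsUnique_path a b).choose_spec.1

theorem Walk.IsPath.eq_treePath {a b : V} {p : G.Walk a b} (hp : p.IsPath) :
    p = treePath G hG a b :=
  (hG.existsUnique_path a b).choose_spec.2 p hp

theorem treePath_self (a : V) : treePath G hG a a = Walk.nil :=
  (Walk.IsPath.nil.eq_treePath hG).symm

theorem treePath_eq_cons_or [DecidableEq V] {x z : V} (h : G.Adj x z) (y : V) :
    treePath G hG x y = .cons h (treePath G hG z y) ∨
      treePath G hG z y = .cons h.symm (treePath G hG x y) := by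
  set q := treePath G hG z y
  have hq : q.IsPath := treePath_isPath hG z y
  by_cases hx : x ∈ q.support
  · right
    have hzx : (Walk.cons h.symm .nil : G.Walk z x).IsPath := by simp [h.ne']
    rw [← q.take_spec hx, (hq.takeUntil hx).eq_treePath hG, ← hzx.eq_treePath hG,
      (hq.dropUntil hx).eq_treePath hG, Walk.cons_append, Walk.nil_append]
  · exact .inl ((hq.cons hx).eq_treePath hG).symm

theorem count_edges_mod_two_eq_treePath [DecidableEq V] {x y : V} (p : G.Walk x y) (e : Sym2 V) :
    p.edges.count e % 2 = (treePath G hG x y).edges.count e % 2 := by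
  induction p with
  | nil => rw [treePath_self]
  | @cons x z y h p ih =>
    rcases treePath_eq_cons_or hG h y with hxy | hzy
    · simp only [hxy, Walk.edges_cons, List.count_cons] at ih ⊢
      omega
    · simp only [hzy, Walk.edges_cons, List.count_cons, Sym2.eq_swap] at ih ⊢
      omega

theorem mem_edges_treePath_iff_xor (v v₁ v₂ : V) (e : Sym2 V) :
    e ∈ (treePath G hG v₁ v₂).edges ↔
      Xor (e ∈ (treePath G hG v v₁).edges) (e ∈ (treePath G hG v v₂).edges) := by
  classical
  have hcount := count_edges_mod_two_eq_treePath hG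
    ((treePath G hG v v₁).reverse.append (treePath G hG v v₂)) e
  rw [Walk.edges_append, List.count_append, Walk.edges_reverse, List.count_reverse] at hcount
  simp only [(treePath_isPath hG _ _).edges_nodup.count] at hcount
  by_cases h₁ : e ∈ (treePath G hG v v₁).edges <;>
    by_cases h₂ : e ∈ (treePath G hG v v₂).edges <;>
    by_cases h : e ∈ (treePath G hG v₁ v₂).edges <;>
    simp [h₁, h₂, h] at hcount ⊢

theorem sum_ite_mem_edges_of_isTrail [DecidableEq V] [Fintype G.edgeSet] {M : Type*}
    [AddCommMonoid M] {a b : V} {p : G.Walk a b} (hp : p.IsTrail) (f : Sym2 V → M) :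
    ∑ e : G.edgeSet, (if (e : Sym2 V) ∈ p.edges then f e else 0) = (p.edges.map f).sum := by
  classical
  rw [← Finset.sum_subtype G.edgeFinset (fun _ ↦ mem_edgeFinset)
      (fun e ↦ if e ∈ p.edges then f e else 0), ← List.sum_toFinset f hp.edges_nodup, ← Finset.sum_filter]
  congr 1
  ext e
  simpa using fun he ↦ p.edges_subset_edgeSet he

end SimpleGraph

theorem sq_ite_sub_ite {p q : Prop} [Decidable p] [Decidable q] (s : ℝ) :
    ((if p then s else 0) - if q then s else 0) ^ 2 = if Xor p q then s ^ 2 else 0 := by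
  by_cases p <;> by_cases q <;> simp [*]

/-- the squared Euclidean distance between embedded nodes is the tree distance,
equivalently the distance is the square root of the tree distance. -/
theorem sqrtEmbed_dist_sq {V : Type*} [DecidableEq V] (G : SimpleGraph V) (hG : G.IsTree)
    [Fintype G.edgeSet] (w : Sym2 V → ℝ) (hw : ∀ e ∈ G.edgeSet, 0 < w e)
    (v v₁ v₂ : V) :
    ‖sqrtEmbed G hG w v v₁ - sqrtEmbed G hG w v v₂‖ ^ 2 = treeDist G hG w v₁ v₂ ∧
    ‖sqrtEmbed G hG w v v₁ - sqrtEmbed G hG w v v₂‖ = Real.sqrt (treeDist G hG w v₁ v₂) := by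
  have hsq : ‖sqrtEmbed G hG w v v₁ - sqrtEmbed G hG w v v₂‖ ^ 2 = treeDist G hG w v₁ v₂ := by
    rw [EuclideanSpace.norm_sq_eq, treeDist,
      ← sum_ite_mem_edges_of_isTrail (treePath_isPath hG v₁ v₂).isTrail]
    refine Finset.sum_congr rfl fun e _ ↦ ?_
    simp only [sqrtEmbed, WithLp.ofLp_sub, Pi.sub_apply, Real.norm_eq_abs, sq_abs, sq_ite_sub_ite,
      Real.sq_sqrt (hw e e.2).le, ← mem_edges_treePath_iff_xor]
  exact ⟨hsq, by rw [← hsq, Real.sqrt_sq (norm_nonneg _)]⟩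
end

section
/- Let a, b be distinct points in a Euclidean space and S a finite nonempty set of points whose centroid is c. If (a - b) is orthogonal to z - z' for all z, z' ∈ S (so that the segment from b to a is orthogonal to the affine span of S), then the point p(λ) = λa + (1-λ)b on the segment (λ ∈ [0,1]) minimizing the distance to c also minimizes the distance to the affine span of S; i.e., argmin_{λ∈[0,1]} ‖p(λ) - c‖ = argmin_{λ∈[0,1]} dist(p(λ), aff(S)). -/
open RealInnerProductSpace in
/-- if the segment direction `a - b` is orthogonal to all difference vectors
of the finite nonempty set `S` with centroid `c`, then a point `p(λ) = λ a + (1-λ) b`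
(`λ ∈ [0,1]`) minimizes the distance to `c` over the segment iff it minimizes the distance
to the affine span of `S`. -/
theorem segment_centroid_vs_affineSpan {E : Type*} [NormedAddCommGroup E]
    [InnerProductSpace ℝ E] (a b : E) (hab : a ≠ b) (S : Finset E) (hS : S.Nonempty)
    (c : E) (hc : c = (S.card : ℝ)⁻¹ • ∑ z ∈ S, z)
    (horth : ∀ z ∈ S, ∀ z' ∈ S, ⟪a - b, z - z'⟫ = 0)
    (p : ℝ → E) (hp : ∀ lam, p lam = lam • a + (1 - lam) • b) :
    ∀ lam ∈ Set.Icc (0 : ℝ) 1,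
      ((∀ mu ∈ Set.Icc (0 : ℝ) 1, ‖p lam - c‖ ≤ ‖p mu - c‖) ↔
        (∀ mu ∈ Set.Icc (0 : ℝ) 1,
          Metric.infDist (p lam) (affineSpan ℝ (S : Set E) : Set E) ≤
            Metric.infDist (p mu) (affineSpan ℝ (S : Set E) : Set E))) := by
  set V : Submodule ℝ E := vectorSpan ℝ (S : Set E) with hV
  set A : AffineSubspace ℝ E := affineSpan ℝ (S : Set E) with hA
  -- a - b is orthogonal to everything in V
  have horthV : ∀ v ∈ V, ⟪a - b, v⟫ = 0 := by
    intro v hv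
    have hle : V ≤ (ℝ ∙ (a - b))ᗮ := by
      rw [hV, vectorSpan_def, Submodule.span_le]
      rintro w ⟨z, hz, z', hz', rfl⟩
      exact Submodule.mem_orthogonal_singleton_iff_inner_right.2 (horth z hz z' hz')
    exact Submodule.mem_orthogonal_singleton_iff_inner_right.1 (hle hv)
  -- the centroid lies in the affine span
  obtain ⟨z0, hz0⟩ := hS
  have hz0A : z0 ∈ A := subset_affineSpan ℝ (S : Set E) (Finset.mem_coe.2 hz0)
  have hcard : (S.card : ℝ) ≠ 0 := by
    exact_mod_cast Finset.card_ne_zero_of_mem hz0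
  have hcV : c - z0 ∈ V := by
    have hsum : ∑ z ∈ S, (z - z0) = (∑ z ∈ S, z) - (S.card : ℝ) • z0 := by
      rw [Finset.sum_sub_distrib, Finset.sum_const, Nat.cast_smul_eq_nsmul]
    have hcz : c - z0 = (S.card : ℝ)⁻¹ • ∑ z ∈ S, (z - z0) := by
      rw [hsum, smul_sub, smul_smul, inv_mul_cancel₀ hcard, one_smul, hc]
    rw [hcz]
    refine Submodule.smul_mem _ _ (Submodule.sum_mem _ fun z hz => ?_)
    have := vsub_mem_vectorSpan ℝ (Finset.mem_coe.2 hz) (Finset.mem_coe.2 hz0)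
    simpa using this
  have hcA : c ∈ A := by
    have h1 : c = (c - z0) +ᵥ z0 := by simp
    rw [h1]
    exact AffineSubspace.vadd_mem_of_mem_direction
      (by rwa [hA, direction_affineSpan]) hz0A
  have hAne : (A : Set E).Nonempty := ⟨c, hcA⟩
  -- decompose b - c
  haveI : FiniteDimensional ℝ V := finiteDimensional_vectorSpan_of_finite ℝ S.finite_toSet
  obtain ⟨v0, hv0, u0, hu0, hbc⟩ := V.exists_add_mem_mem_orthogonal (b - c)
  -- p lam - c = lam • (a - b) + (v0 + u0)
  have hdiff : ∀ lam : ℝ, p lam - c = lam • (a - b) + (v0 + u0) := by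
    intro lam
    rw [hp, ← hbc]
    module
  -- key vector u(lam) is orthogonal to V
  have huV : ∀ lam : ℝ, ∀ v ∈ V, ⟪lam • (a - b) + u0, v⟫ = 0 := by
    intro lam v hv
    have h0 : ⟪u0, v⟫ = 0 := by
      have h1 := (Submodule.mem_orthogonal V u0).1 hu0 v hv
      rwa [real_inner_comm] at h1
    rw [inner_add_left, real_inner_smul_left, horthV v hv, h0]
    ring
  -- infDist formula
  have hinf : ∀ lam : ℝ, Metric.infDist (p lam) (A : Set E) = ‖lam • (a - b) + u0‖ := by
    intro lam
    refine le_antisymm ?_ ?_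
    · have hy : v0 +ᵥ c ∈ A :=
        AffineSubspace.vadd_mem_of_mem_direction
          (by rwa [hA, direction_affineSpan]) hcA
      have hd : dist (p lam) (v0 +ᵥ c) = ‖lam • (a - b) + u0‖ := by
        rw [dist_eq_norm]
        congr 1
        rw [vadd_eq_add, show p lam - (v0 + c) = p lam - c - v0 by abel, hdiff lam]
        abel
      rw [← hd]
      exact Metric.infDist_le_dist_of_mem hy
    · refine le_of_not_gt fun hlt => ?_
      obtain ⟨y, hy, hdy⟩ := (Metric.infDist_lt_iff hAne).1 hlt
      have hyV : v0 + (c - y) ∈ V := by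
        have h1 : c - y ∈ V := by
          have := AffineSubspace.vsub_mem_direction hcA hy
          rwa [hA, direction_affineSpan, vsub_eq_sub] at this
        exact V.add_mem hv0 h1
      have hsplit : p lam - y = (lam • (a - b) + u0) + (v0 + (c - y)) := by
        rw [show p lam - y = (p lam - c) + (c - y) by abel, hdiff lam]; abel
      have hns : ‖p lam - y‖ ^ 2 = ‖lam • (a - b) + u0‖ ^ 2 + ‖v0 + (c - y)‖ ^ 2 := by
        rw [hsplit, norm_add_sq_real, huV lam _ hyV]; ring
      have h1 : ‖lam • (a - b) + u0‖ ^ 2 ≤ ‖p lam - y‖ ^ 2 := by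
        rw [hns]; nlinarith [sq_nonneg ‖v0 + (c - y)‖]
      have h2 : ‖lam • (a - b) + u0‖ ≤ ‖p lam - y‖ :=
        (pow_le_pow_iff_left₀ (norm_nonneg _) (norm_nonneg _) two_ne_zero).1 h1
      rw [dist_eq_norm] at hdy
      exact absurd hdy (not_lt.2 h2)
  -- norm formula
  have hnorm : ∀ lam : ℝ, ‖p lam - c‖ ^ 2 = ‖lam • (a - b) + u0‖ ^ 2 + ‖v0‖ ^ 2 := by
    intro lam
    rw [show p lam - c = (lam • (a - b) + u0) + v0 by rw [hdiff lam]; abel,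
      norm_add_sq_real, huV lam v0 hv0]
    ring
  -- equivalence
  have key : ∀ x y : ℝ, (‖p x - c‖ ≤ ‖p y - c‖ ↔
      Metric.infDist (p x) (A : Set E) ≤ Metric.infDist (p y) (A : Set E)) := by
    intro x y
    rw [hinf x, hinf y]
    constructor
    · intro h
      have h2 : ‖p x - c‖ ^ 2 ≤ ‖p y - c‖ ^ 2 := pow_le_pow_left₀ (norm_nonneg _) h 2
      have h3 : ‖x • (a - b) + u0‖ ^ 2 ≤ ‖y • (a - b) + u0‖ ^ 2 := by
        have := hnorm x; have := hnorm y; linarith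
      exact (pow_le_pow_iff_left₀ (norm_nonneg _) (norm_nonneg _) two_ne_zero).1 h3
    · intro h
      have h2 : ‖x • (a - b) + u0‖ ^ 2 ≤ ‖y • (a - b) + u0‖ ^ 2 :=
        pow_le_pow_left₀ (norm_nonneg _) h 2
      have h3 : ‖p x - c‖ ^ 2 ≤ ‖p y - c‖ ^ 2 := by
        have := hnorm x; have := hnorm y; linarith
      exact (pow_le_pow_iff_left₀ (norm_nonneg _) (norm_nonneg _) two_ne_zero).1 h3
  intro lam _
  constructor
  · intro h mu hmu
    exact (key lam mu).1 (h mu hmu)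
  · intro h mu hmu
    exact (key lam mu).2 (h mu hmu)
end
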